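/- arXiv:1309.2704 — 5 statements merged into one kernel-verified Lean document; each statement's English description precedes it below -/
import Mathlib

section
/- For X_0 > 0 and -1 < X < 0, let R_1'(α) = -1 + X_0/(α² - X_0²) - X_0²·(X+1)/(α·(α² - X_0²)·√((X+1)² - 1 + X_0²/α²)), defined for α with X_0 < α < X_0/√(1-(1+X)²) (so that (X+1)² - 1 + X_0²/α² > 0). Then R_1'(α) < 0 on this interval. -/
/-!
Multiplying by `α² - X₀² > 0` and writing `r = α √((X+1)² - 1 + X₀²/α²) = √(X₀² - (1 - (X+1)²) α²)`,
the claim becomes `(X₀ + X₀² - α²) r < X₀² (X+1)`. Since `α > X₀`, the first factor is less than `X₀`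
and `r < X₀ (X+1)`, both strictly, which gives the inequality.
-/

open Real

lemma pos_of_lt_div_sqrt {a x y : ℝ} (ha : 0 ≤ a) (h : a < x / √y) : 0 < y := by
  by_contra hy
  rw [sqrt_eq_zero'.2 (not_lt.1 hy), div_zero] at h
  exact h.not_ge ha

lemma sq_mul_lt_sq_of_lt_div_sqrt {a x y : ℝ} (ha : 0 ≤ a) (h : a < x / √y) :
    a ^ 2 * y < x ^ 2 := by
  have hy := pos_of_lt_div_sqrt ha h
  have hlt : a * √y < x := (lt_div_iff₀ (sqrt_pos.2 hy)).1 h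
  calc a ^ 2 * y = (a * √y) ^ 2 := by rw [mul_pow, sq_sqrt hy.le]
    _ < x ^ 2 := pow_lt_pow_left₀ hlt (by positivity) two_ne_zero

lemma mul_sqrt_add_div_sq {α u v : ℝ} (hα : 0 < α) :
    α * √(u + v / α ^ 2) = √(α ^ 2 * u + v) := by
  rw [← sqrt_sq hα.le, ← sqrt_mul (sq_nonneg α), sqrt_sq hα.le]
  congr 1
  field_simp

lemma neg_one_add_div_sub_div_neg {x D r b : ℝ} (hD : 0 < D) (hr : 0 < r)
    (h : (x - D) * r < x ^ 2 * b) : -1 + x / D - x ^ 2 * b / (D * r) < 0 := by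
  have hform : -1 + x / D - x ^ 2 * b / (D * r) = ((x - D) * r - x ^ 2 * b) / (D * r) := by
    field_simp
    ring
  rw [hform]
  exact div_neg_of_neg_of_pos (by linarith) (by positivity)

theorem R1_deriv_neg_general (X₀ X α : ℝ) (hX₀ : 0 < X₀) (hX1 : -1 < X)
    (hα1 : X₀ < α) (hα2 : α < X₀ / Real.sqrt (1 - (1 + X) ^ 2)) :
    -1 + X₀ / (α ^ 2 - X₀ ^ 2) -
      X₀ ^ 2 * (X + 1) /
        (α * (α ^ 2 - X₀ ^ 2) * Real.sqrt ((X + 1) ^ 2 - 1 + X₀ ^ 2 / α ^ 2)) < 0 := by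
  have hα : 0 < α := hX₀.trans hα1
  have hc := pos_of_lt_div_sqrt hα.le hα2
  have hαc := sq_mul_lt_sq_of_lt_div_sqrt hα.le hα2
  rw [add_comm 1 X] at hc hαc
  have hD : 0 < α ^ 2 - X₀ ^ 2 := by nlinarith
  set r := √(α ^ 2 * ((X + 1) ^ 2 - 1) + X₀ ^ 2) with hr
  have hr_pos : 0 < r := sqrt_pos.2 (by nlinarith)
  have hr_lt : r < X₀ * (X + 1) := (sqrt_lt' (by nlinarith)).2 (by nlinarith)
  rw [show ∀ s, α * (α ^ 2 - X₀ ^ 2) * s = (α ^ 2 - X₀ ^ 2) * (α * s) by intro s; ring,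
    mul_sqrt_add_div_sq hα, ← hr]
  exact neg_one_add_div_sub_div_neg hD hr_pos (by nlinarith)

theorem R1_deriv_neg (X₀ X α : ℝ) (hX₀ : 0 < X₀) (hX1 : -1 < X) (hX0 : X < 0)
    (hα1 : X₀ < α) (hα2 : α < X₀ / Real.sqrt (1 - (1 + X) ^ 2)) :
    -1 + X₀ / (α ^ 2 - X₀ ^ 2) -
      X₀ ^ 2 * (X + 1) /
        (α * (α ^ 2 - X₀ ^ 2) * Real.sqrt ((X + 1) ^ 2 - 1 + X₀ ^ 2 / α ^ 2)) < 0 :=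
  R1_deriv_neg_general X₀ X α hX₀ hX1 hα1 hα2
end

section
/- Fix X_0 > 0 and X with -1 < X < 0 and X_0/α² terms well-defined. The quartic equation [(X+1)²-1]·α⁴ - [(2X_0+X_0²)(X+1)² - 2X_0 - 2X_0²]·α² + X_0²·(X+X_0+2)(X-X_0) = 0, viewed as a quadratic in α², has solutions α²_± = (X_0/(2|X|(X+2)))·[(X_0+2)|X|(X+2) + X_0 ± √X_0·(X+1)·√((X_0+4)(X+1)² - 4)], and these are real if and only if (X_0+4)(X+1)² - 4 ≥ 0, i.e., X ≥ -1 + 2/√(X_0+4). -/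
/-!
Since `(X + 1)² - 1 = X (X + 2)`, the equation is a quadratic in `s = α²` with nonzero leading
coefficient for `-1 < X < 0`, and its discriminant factors as
`X₀³ (X + 1)² ((X₀ + 4)(X + 1)² - 4)`. When the last factor is nonnegative the discriminant is the
square of `X₀ √X₀ (X + 1) √((X₀ + 4)(X + 1)² - 4)`, and the two stated values are exactly the two
roots of the quadratic formula (with `|X| = -X`). The reality condition is `(X + 1) √(X₀ + 4) ≥ 2`,
obtained by taking square roots.
-/

open Real

lemma two_div_sqrt_le_iff {a b : ℝ} (ha : 0 < a) (hb : 0 < b) : 2 / √b ≤ a ↔ 4 ≤ b * a ^ 2 := by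
  rw [div_le_iff₀ (sqrt_pos.mpr hb), ← pow_le_pow_iff_left₀ zero_le_two (by positivity) two_ne_zero,
    mul_pow, sq_sqrt hb.le]
  norm_num [mul_comm]

lemma caustic_discrim_eq (X₀ X : ℝ) :
    discrim ((X + 1) ^ 2 - 1) (-((2 * X₀ + X₀ ^ 2) * (X + 1) ^ 2 - 2 * X₀ - 2 * X₀ ^ 2))
      (X₀ ^ 2 * (X + X₀ + 2) * (X - X₀)) = X₀ ^ 3 * (X + 1) ^ 2 * ((X₀ + 4) * (X + 1) ^ 2 - 4) := by
  unfold discrim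
  ring

lemma caustic_root_eq (X₀ : ℝ) {X : ℝ} (hX2 : -2 < X) (hX : X < 0) (r : ℝ) :
    X₀ / (2 * |X| * (X + 2)) * ((X₀ + 2) * |X| * (X + 2) + X₀ + r) =
      ((2 * X₀ + X₀ ^ 2) * (X + 1) ^ 2 - 2 * X₀ - 2 * X₀ ^ 2 - X₀ * r) / (2 * ((X + 1) ^ 2 - 1)) := by
  have : X + 2 ≠ 0 := by linarith
  rw [abs_of_neg hX, show (X + 1) ^ 2 - 1 = X * (X + 2) by ring]
  field_simp [hX.ne]
  ring

theorem caustic_quartic_roots (X₀ X : ℝ) (hX₀ : 0 < X₀) (hX1 : -1 < X) (hX0 : X < 0) :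
    ((X₀ + 4) * (X + 1) ^ 2 - 4 ≥ 0 ↔ X ≥ -1 + 2 / Real.sqrt (X₀ + 4)) ∧
    ((X₀ + 4) * (X + 1) ^ 2 - 4 ≥ 0 →
      ∀ s : ℝ,
        (s = X₀ / (2 * |X| * (X + 2)) *
            ((X₀ + 2) * |X| * (X + 2) + X₀ +
              Real.sqrt X₀ * (X + 1) * Real.sqrt ((X₀ + 4) * (X + 1) ^ 2 - 4)) ∨
         s = X₀ / (2 * |X| * (X + 2)) *
            ((X₀ + 2) * |X| * (X + 2) + X₀ -
              Real.sqrt X₀ * (X + 1) * Real.sqrt ((X₀ + 4) * (X + 1) ^ 2 - 4))) →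
        ((X + 1) ^ 2 - 1) * s ^ 2 -
            ((2 * X₀ + X₀ ^ 2) * (X + 1) ^ 2 - 2 * X₀ - 2 * X₀ ^ 2) * s +
            X₀ ^ 2 * (X + X₀ + 2) * (X - X₀) = 0) := by
  have hX1pos : 0 < X + 1 := by linarith
  refine ⟨?_, fun hD s hs => ?_⟩
  · rw [ge_iff_le, ge_iff_le, sub_nonneg, ← two_div_sqrt_le_iff hX1pos (by linarith)]
    constructor <;> intro <;> linarith
  · set r := √X₀ * (X + 1) * √((X₀ + 4) * (X + 1) ^ 2 - 4)
    have hr : r ^ 2 = X₀ * (X + 1) ^ 2 * ((X₀ + 4) * (X + 1) ^ 2 - 4) := by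
      rw [mul_pow, mul_pow, sq_sqrt hX₀.le, sq_sqrt hD]
    have hX2 : -2 < X := by linarith
    have ha : (X + 1) ^ 2 - 1 ≠ 0 := by nlinarith
    have hdiscrim := (caustic_discrim_eq X₀ X).trans
      (show _ = X₀ * r * (X₀ * r) by linear_combination (-X₀ ^ 2) * hr)
    rw [sub_eq_add_neg _ r, caustic_root_eq X₀ hX2 hX0, caustic_root_eq X₀ hX2 hX0, mul_neg,
      sub_neg_eq_add] at hs
    have hquad := (quadratic_eq_zero_iff ha hdiscrim s).mpr (by rw [neg_neg]; exact hs.symm)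
    linear_combination hquad
end

section
/- For X_0 > 0 and -1 < X < 0, define f̃''(z) = 2X_0/(1-4z)^{3/2} - 1/(2z√(1-4z)) - (1+X)/(2z√((1+X)²-4z)) for 0 < z < (1+X)²/4. At X = X_cusp = -1 + 2/√(X_0+4), the point z = 3/(4(X_0+3)) lies in (0, (1+X_cusp)²/4) and satisfies f̃''(3/(4(X_0+3))) = 0. -/
/-! At the cusp point `z = 3/(4(X₀+3))` with `s = 1 + X_cusp = 2/√(X₀+4)` one has
`1 - 4z = (4X₀/3) z` and `s² - 4z = s²(1 - 4z)/4`. Writing `p = √(1 - 4z)`, the second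
relation gives `√(s² - 4z) = s p / 2`, so the last two terms of `f̃''` combine to `-3/(2zp)`,
while the first relation turns `2X₀/p³` into `3/(2zp)`. -/

open Real Set

lemma sqrt_sq_sub_four_mul_eq {s z : ℝ} (hs : 0 ≤ s) (h : s ^ 2 - 4 * z = s ^ 2 * (1 - 4 * z) / 4) :
    √(s ^ 2 - 4 * z) = s / 2 * √(1 - 4 * z) := by
  rw [h, show s ^ 2 * (1 - 4 * z) / 4 = (s / 2) ^ 2 * (1 - 4 * z) by ring,
    sqrt_mul (by positivity), sqrt_sq (by positivity)]

lemma phase_second_deriv_eq_zero {X₀ s z : ℝ} (hs : 0 < s) (hz : z ≠ 0) (hp : 0 < 1 - 4 * z)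
    (h₁ : 1 - 4 * z = 4 * X₀ / 3 * z) (h₂ : s ^ 2 - 4 * z = s ^ 2 * (1 - 4 * z) / 4) :
    2 * X₀ / √(1 - 4 * z) ^ 3 - 1 / (2 * z * √(1 - 4 * z)) - s / (2 * z * √(s ^ 2 - 4 * z)) = 0 := by
  rw [sqrt_sq_sub_four_mul_eq hs.le h₂]
  have hp_sq : √(1 - 4 * z) ^ 2 = 4 * X₀ / 3 * z := by rw [sq_sqrt hp.le, h₁]
  have hp_pos : 0 < √(1 - 4 * z) := sqrt_pos.mpr hp
  field_simp
  linear_combination (-3 : ℝ) * hp_sq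

section Cusp

variable {X₀ : ℝ}

lemma cusp_scale_sq (h : 0 < X₀ + 4) : (2 / √(X₀ + 4)) ^ 2 = 4 / (X₀ + 4) := by
  rw [div_pow, sq_sqrt h.le]
  norm_num

lemma one_sub_four_mul_cusp (h : 0 < X₀ + 3) :
    1 - 4 * (3 / (4 * (X₀ + 3))) = 4 * X₀ / 3 * (3 / (4 * (X₀ + 3))) := by
  field_simp
  ring

lemma cusp_scale_sq_sub_four_mul (h : 0 < X₀ + 3) :
    (2 / √(X₀ + 4)) ^ 2 - 4 * (3 / (4 * (X₀ + 3))) =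
      (2 / √(X₀ + 4)) ^ 2 * (1 - 4 * (3 / (4 * (X₀ + 3)))) / 4 := by
  have h₄ : 0 < X₀ + 4 := by linarith
  rw [cusp_scale_sq h₄]
  field_simp
  ring

lemma cusp_mem_Ioo (hX₀ : 0 < X₀) :
    3 / (4 * (X₀ + 3)) ∈ Ioo 0 ((2 / √(X₀ + 4)) ^ 2 / 4) := by
  rw [cusp_scale_sq (by linarith), show 4 / (X₀ + 4) / 4 = 1 / (X₀ + 4) by ring]
  refine ⟨by positivity, ?_⟩
  rw [div_lt_div_iff₀ (by positivity) (by positivity)]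
  linarith

end Cusp

theorem ftilde_second_deriv_vanishes_at_cusp (X₀ : ℝ) (hX₀ : 0 < X₀) :
    (3 / (4 * (X₀ + 3)) : ℝ) ∈
      Set.Ioo (0 : ℝ) ((1 + (-1 + 2 / Real.sqrt (X₀ + 4))) ^ 2 / 4) ∧
    (fun z : ℝ =>
        2 * X₀ / (Real.sqrt (1 - 4 * z)) ^ 3 -
          1 / (2 * z * Real.sqrt (1 - 4 * z)) -
          (1 + (-1 + 2 / Real.sqrt (X₀ + 4))) /
            (2 * z * Real.sqrt ((1 + (-1 + 2 / Real.sqrt (X₀ + 4))) ^ 2 - 4 * z)))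
      (3 / (4 * (X₀ + 3))) = 0 := by
  have h₃ : 0 < X₀ + 3 := by linarith
  have hmem := cusp_mem_Ioo hX₀
  rw [add_neg_cancel_left]
  refine ⟨hmem, phase_second_deriv_eq_zero (by positivity) hmem.1.ne' ?_
    (one_sub_four_mul_cusp h₃) (cusp_scale_sq_sub_four_mul h₃)⟩
  rw [one_sub_four_mul_cusp h₃]
  exact mul_pos (by positivity) hmem.1
end

section
/- For a = X + X_0 > 0, define f'(z) = -t + a/√(1-4z) + 2·log((1 + √(1-4z))/(2√z)) for 0 < z < 1/4. Then f''(z) = 2a/(1-4z)^{3/2} - 1/(z√(1-4z)), f''(z) = 0 has the unique solution z̃ = 1/(2a+4) in (0,1/4), and min_{0<z<1/4} f'(z) = -t + √(a(a+2)) + 2·log((√(a+2) + √a)/√2). -/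
/-!
Writing `s = √(1 - 4z)`, one has `s' = -2/s` and `s² = 1 - 4z`, which gives
`f''(z) = ((2a + 4) z - 1) / (z s³)`. Hence `f''` changes sign exactly once on `(0, 1/4)`, from
negative to positive, at `z̃ = 1/(2a + 4)`, so `f'` is antitone left of `z̃` and monotone right of
it. At `z̃` one has `1 - 4 z̃ = a/(a + 2)` and `z̃ = 1/(2(a + 2))`, which gives the closed form.
-/

open Real Set Filter Topology

namespace HalfinWhitt

noncomputable def phaseDeriv (a t z : ℝ) : ℝ :=
  -t + a / √(1 - 4 * z) + 2 * log ((1 + √(1 - 4 * z)) / (2 * √z))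

noncomputable def phaseSecondDeriv (a z : ℝ) : ℝ :=
  2 * a / √(1 - 4 * z) ^ 3 - 1 / (z * √(1 - 4 * z))

theorem isMinOn_of_hasDerivAt_of_nonpos_of_nonneg {f f' : ℝ → ℝ} {l r c : ℝ}
    (hc : c ∈ Ioo l r) (hf : ∀ x ∈ Ioo l r, HasDerivAt f (f' x) x)
    (hleft : ∀ x ∈ Ioo l c, f' x ≤ 0) (hright : ∀ x ∈ Ioo c r, 0 ≤ f' x) :
    IsMinOn f (Ioo l r) c := by
  have hcont : ContinuousOn f (Ioo l r) := HasDerivAt.continuousOn hf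
  refine isMinOn_iff.mpr fun z hz => ?_
  rcases le_total z c with hzc | hcz
  · have hsub : Icc z c ⊆ Ioo l r := Icc_subset_Ioo hz.1 hc.2
    refine antitoneOn_of_hasDerivWithinAt_nonpos (f' := f') (convex_Icc z c) (hcont.mono hsub)
      (fun x hx => ?_) (fun x hx => ?_) ⟨le_rfl, hzc⟩ ⟨hzc, le_rfl⟩ hzc
    · exact (hf x (hsub (interior_subset hx))).hasDerivWithinAt
    · rw [interior_Icc] at hx
      exact hleft x ⟨hz.1.trans_le hx.1.le, hx.2⟩
  · have hsub : Icc c z ⊆ Ioo l r := Icc_subset_Ioo hc.1 hz.2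
    refine monotoneOn_of_hasDerivWithinAt_nonneg (f' := f') (convex_Icc c z) (hcont.mono hsub)
      (fun x hx => ?_) (fun x hx => ?_) ⟨le_rfl, hcz⟩ ⟨hcz, le_rfl⟩ hcz
    · exact (hf x (hsub (interior_subset hx))).hasDerivWithinAt
    · rw [interior_Icc] at hx
      exact hright x ⟨hx.1, hx.2.trans_le hz.2.le⟩

theorem two_mul_log_div_two_mul_sqrt {u w : ℝ} (hu : 0 < u) (hw : 0 < w) :
    2 * log (u / (2 * √w)) = 2 * log u - 2 * log 2 - log w := by
  rw [log_div hu.ne' (by positivity), log_mul two_ne_zero (sqrt_pos.mpr hw).ne', log_sqrt hw.le]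
  ring

theorem hasDerivAt_sqrt_one_sub_four_mul {z : ℝ} (hz : z < 1 / 4) :
    HasDerivAt (fun w => √(1 - 4 * w)) (-2 / √(1 - 4 * z)) z := by
  have hlin : HasDerivAt (fun w : ℝ => 1 - 4 * w) (-4) z := by
    simpa using ((hasDerivAt_id z).const_mul (4 : ℝ)).const_sub 1
  convert hlin.sqrt (by linarith) using 1
  have : √(1 - 4 * z) ≠ 0 := (sqrt_pos.mpr (by linarith)).ne'
  field_simp
  norm_num

theorem hasDerivAt_two_mul_log_phase {z : ℝ} (hz : z ∈ Ioo (0 : ℝ) (1 / 4)) :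
    HasDerivAt (fun w => 2 * log ((1 + √(1 - 4 * w)) / (2 * √w)))
      (-(1 / (z * √(1 - 4 * z)))) z := by
  have hs : 0 < √(1 - 4 * z) := sqrt_pos.mpr (by linarith [hz.2])
  have hs2 : √(1 - 4 * z) ^ 2 = 1 - 4 * z := sq_sqrt (by linarith [hz.2])
  have hsplit : (fun w => 2 * log (1 + √(1 - 4 * w)) - 2 * log 2 - log w)
      =ᶠ[𝓝 z] fun w => 2 * log ((1 + √(1 - 4 * w)) / (2 * √w)) := by
    filter_upwards [isOpen_Ioo.mem_nhds hz] with w hw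
    exact (two_mul_log_div_two_mul_sqrt (by positivity) hw.1).symm
  have hlog : HasDerivAt (fun w => log (1 + √(1 - 4 * w)))
      ((0 + -2 / √(1 - 4 * z)) / (1 + √(1 - 4 * z))) z :=
    ((hasDerivAt_const z 1).add (hasDerivAt_sqrt_one_sub_four_mul hz.2)).log
      (by positivity : (0 : ℝ) < 1 + √(1 - 4 * z)).ne'
  refine ((((hlog.const_mul 2).sub_const (2 * log 2)).sub
    (hasDerivAt_log hz.1.ne')).congr_of_eventuallyEq hsplit.symm).congr_deriv ?_
  have : 0 < z := hz.1
  field_simp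
  linear_combination -hs2

theorem hasDerivAt_phaseDeriv (a t : ℝ) {z : ℝ} (hz : z ∈ Ioo (0 : ℝ) (1 / 4)) :
    HasDerivAt (phaseDeriv a t) (phaseSecondDeriv a z) z := by
  have hs : 0 < √(1 - 4 * z) := sqrt_pos.mpr (by linarith [hz.2])
  have hdiv := (hasDerivAt_const z a).div (hasDerivAt_sqrt_one_sub_four_mul hz.2) hs.ne'
  refine (((hasDerivAt_const z (-t)).add hdiv).add
    (hasDerivAt_two_mul_log_phase hz)).congr_deriv ?_
  unfold phaseSecondDeriv
  field_simp
  ring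

theorem phaseSecondDeriv_eq {a z : ℝ} (hz : z ∈ Ioo (0 : ℝ) (1 / 4)) :
    phaseSecondDeriv a z = ((2 * a + 4) * z - 1) / (z * √(1 - 4 * z) ^ 3) := by
  have hs : 0 < √(1 - 4 * z) := sqrt_pos.mpr (by linarith [hz.2])
  have hs2 : √(1 - 4 * z) ^ 2 = 1 - 4 * z := sq_sqrt (by linarith [hz.2])
  have : 0 < z := hz.1
  unfold phaseSecondDeriv
  field_simp
  linear_combination -hs2

theorem phaseSecondDeriv_neg {a z : ℝ} (ha : 0 < a) (hz : z ∈ Ioo (0 : ℝ) (1 / 4))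
    (hzc : z < 1 / (2 * a + 4)) : phaseSecondDeriv a z < 0 := by
  have : 0 < z := hz.1
  have : 0 < √(1 - 4 * z) := sqrt_pos.mpr (by linarith [hz.2])
  rw [phaseSecondDeriv_eq hz]
  refine div_neg_of_neg_of_pos ?_ (by positivity)
  rw [lt_div_iff₀ (by linarith)] at hzc
  linarith

theorem phaseSecondDeriv_pos {a z : ℝ} (ha : 0 < a) (hz : z ∈ Ioo (0 : ℝ) (1 / 4))
    (hcz : 1 / (2 * a + 4) < z) : 0 < phaseSecondDeriv a z := by
  have : 0 < z := hz.1
  have : 0 < √(1 - 4 * z) := sqrt_pos.mpr (by linarith [hz.2])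
  rw [phaseSecondDeriv_eq hz]
  refine div_pos ?_ (by positivity)
  rw [div_lt_iff₀ (by linarith)] at hcz
  linarith

theorem critical_mem_Ioo {a : ℝ} (ha : 0 < a) : 1 / (2 * a + 4) ∈ Ioo (0 : ℝ) (1 / 4) :=
  ⟨by positivity, by rw [div_lt_div_iff₀ (by linarith) (by norm_num)]; linarith⟩

theorem phaseSecondDeriv_critical {a : ℝ} (ha : 0 < a) :
    phaseSecondDeriv a (1 / (2 * a + 4)) = 0 := by
  rw [phaseSecondDeriv_eq (critical_mem_Ioo ha), mul_one_div_cancel (by linarith), sub_self,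
    zero_div]

theorem eq_critical_of_phaseSecondDeriv_eq_zero {a z : ℝ} (ha : 0 < a)
    (hz : z ∈ Ioo (0 : ℝ) (1 / 4)) (h : phaseSecondDeriv a z = 0) : z = 1 / (2 * a + 4) := by
  rcases lt_trichotomy z (1 / (2 * a + 4)) with hlt | heq | hgt
  · exact absurd h (phaseSecondDeriv_neg ha hz hlt).ne
  · exact heq
  · exact absurd h (phaseSecondDeriv_pos ha hz hgt).ne'

theorem isMinOn_phaseDeriv {a : ℝ} (t : ℝ) (ha : 0 < a) :
    IsMinOn (phaseDeriv a t) (Ioo 0 (1 / 4)) (1 / (2 * a + 4)) :=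
  isMinOn_of_hasDerivAt_of_nonpos_of_nonneg (critical_mem_Ioo ha)
    (fun _ hz => hasDerivAt_phaseDeriv a t hz)
    (fun _ hz => (phaseSecondDeriv_neg ha ⟨hz.1, hz.2.trans (critical_mem_Ioo ha).2⟩ hz.2).le)
    (fun _ hz => (phaseSecondDeriv_pos ha ⟨(critical_mem_Ioo ha).1.trans hz.1, hz.2⟩ hz.1).le)

theorem phaseDeriv_critical (a t : ℝ) (ha : 0 < a) :
    phaseDeriv a t (1 / (2 * a + 4)) =
      -t + √(a * (a + 2)) + 2 * log ((√(a + 2) + √a) / √2) := by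
  have ha2 : 0 < a + 2 := by linarith
  have hp : 0 < √a := sqrt_pos.mpr ha
  have hq : 0 < √(a + 2) := sqrt_pos.mpr ha2
  have hs : √(1 - 4 * (1 / (2 * a + 4))) = √a / √(a + 2) := by
    rw [← sqrt_div ha.le]
    congr 1
    field_simp
    ring
  have hz : √(1 / (2 * a + 4)) = 1 / (√2 * √(a + 2)) := by
    rw [← sqrt_mul zero_le_two, sqrt_div zero_le_one, sqrt_one]
    ring_nf
  have hval : a / √(1 - 4 * (1 / (2 * a + 4))) = √(a * (a + 2)) := by
    rw [hs, sqrt_mul ha.le]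
    field_simp
    rw [sq_sqrt ha.le]
  have harg : (1 + √(1 - 4 * (1 / (2 * a + 4)))) / (2 * √(1 / (2 * a + 4))) =
      (√(a + 2) + √a) / √2 := by
    have : 0 < √2 := by positivity
    rw [hs, hz]
    field_simp
    rw [sq_sqrt zero_le_two]
  rw [phaseDeriv, hval, harg]

end HalfinWhitt

open HalfinWhitt in
theorem phase_derivative_minimum (a t : ℝ) (ha : 0 < a) :
    (∀ z ∈ Set.Ioo (0 : ℝ) (1 / 4),
      HasDerivAt
        (fun z : ℝ =>
          -t + a / Real.sqrt (1 - 4 * z) +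
            2 * Real.log ((1 + Real.sqrt (1 - 4 * z)) / (2 * Real.sqrt z)))
        (2 * a / (Real.sqrt (1 - 4 * z)) ^ 3 - 1 / (z * Real.sqrt (1 - 4 * z))) z) ∧
    (1 / (2 * a + 4) : ℝ) ∈ Set.Ioo (0 : ℝ) (1 / 4) ∧
    (2 * a / (Real.sqrt (1 - 4 * (1 / (2 * a + 4)))) ^ 3 -
        1 / ((1 / (2 * a + 4)) * Real.sqrt (1 - 4 * (1 / (2 * a + 4)))) = 0) ∧
    (∀ z ∈ Set.Ioo (0 : ℝ) (1 / 4),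
      2 * a / (Real.sqrt (1 - 4 * z)) ^ 3 - 1 / (z * Real.sqrt (1 - 4 * z)) = 0 →
        z = 1 / (2 * a + 4)) ∧
    (∀ z ∈ Set.Ioo (0 : ℝ) (1 / 4),
      -t + a / Real.sqrt (1 - 4 * (1 / (2 * a + 4))) +
          2 * Real.log ((1 + Real.sqrt (1 - 4 * (1 / (2 * a + 4)))) /
            (2 * Real.sqrt (1 / (2 * a + 4)))) ≤
        -t + a / Real.sqrt (1 - 4 * z) +
          2 * Real.log ((1 + Real.sqrt (1 - 4 * z)) / (2 * Real.sqrt z))) ∧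
    (-t + a / Real.sqrt (1 - 4 * (1 / (2 * a + 4))) +
        2 * Real.log ((1 + Real.sqrt (1 - 4 * (1 / (2 * a + 4)))) /
          (2 * Real.sqrt (1 / (2 * a + 4)))) =
      -t + Real.sqrt (a * (a + 2)) +
        2 * Real.log ((Real.sqrt (a + 2) + Real.sqrt a) / Real.sqrt 2)) :=
  ⟨fun _ hz => hasDerivAt_phaseDeriv a t hz, critical_mem_Ioo ha, phaseSecondDeriv_critical ha,
    fun _ hz => eq_critical_of_phaseSecondDeriv_eq_zero ha hz,
    isMinOn_iff.mp (isMinOn_phaseDeriv t ha), phaseDeriv_critical a t ha⟩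
end

section
/- For X_0 > 0, the caustic relation t - α = (1/2)·log((α² + α·X_0 - X_0)/(α² - α·X_0 - X_0)) combined with differentiating X(t;α) = (1/2 + X_0/(2α))e^{α-t} + (1/2 - X_0/(2α))e^{t-α} - 1 with respect to α gives: ∂X/∂α = 0 if and only if e^{2(t-α)} = (α² + α·X_0 - X_0)/(α² - α·X_0 - X_0), for α > (X_0 + √(X_0² + 4X_0))/2 (so both numerator and denominator are positive). -/
open Real

/-!
The derivative in `α` of the ray is computed termwise. Beyond the larger root of
`α² - α X₀ - X₀` this quadratic is positive, so multiplying the vanishing of the derivative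
by `e^{t-α}` and dividing by the quadratic turns it into the caustic relation.
-/

/-- `ray X₀ t α` is the ray `X(t; α)` started at `X₀`. -/
noncomputable def ray (X₀ t a : ℝ) : ℝ :=
  (1 / 2 + X₀ / (2 * a)) * exp (a - t) + (1 / 2 - X₀ / (2 * a)) * exp (t - a) - 1

lemma hasDerivAt_ray (X₀ t : ℝ) {α : ℝ} (hα : α ≠ 0) :
    HasDerivAt (ray X₀ t)
      ((exp (α - t) * (α ^ 2 + α * X₀ - X₀) - exp (t - α) * (α ^ 2 - α * X₀ - X₀)) / (2 * α ^ 2))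
      α := by
  have hcoef : HasDerivAt (fun a : ℝ => X₀ / (2 * a)) (-(X₀ / (2 * α ^ 2))) α := by
    rw [show (fun a : ℝ => X₀ / (2 * a)) = fun a => X₀ / 2 * a⁻¹ by ext a; ring]
    exact ((hasDerivAt_inv hα).const_mul (X₀ / 2)).congr_deriv (by ring)
  have hgrow : HasDerivAt (fun a : ℝ => exp (a - t)) (exp (α - t)) α := by
    simpa using ((hasDerivAt_id α).sub_const t).exp
  have hdecay : HasDerivAt (fun a : ℝ => exp (t - a)) (-exp (t - α)) α := by
    simpa using ((hasDerivAt_id α).const_sub t).exp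
  refine ((((hcoef.const_add (1 / 2)).mul hgrow).add
    ((hcoef.const_sub (1 / 2)).mul hdecay)).sub_const 1).congr_deriv ?_
  field_simp
  ring

lemma pos_and_sq_sub_mul_sub_pos_of_root_lt {b c α : ℝ} (hc : 0 ≤ c)
    (h : (b + √(b ^ 2 + 4 * c)) / 2 < α) :
    0 < α ∧ 0 < α ^ 2 - α * b - c := by
  have hs := Real.sqrt_nonneg (b ^ 2 + 4 * c)
  have hs2 : √(b ^ 2 + 4 * c) ^ 2 = b ^ 2 + 4 * c := Real.sq_sqrt (by positivity)
  have hαpos : 0 < α := by nlinarith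
  exact ⟨hαpos, by nlinarith⟩

lemma exp_neg_mul_sub_exp_mul_eq_zero_iff {A B : ℝ} (s : ℝ) (hB : B ≠ 0) :
    exp (-s) * A - exp s * B = 0 ↔ exp (2 * s) = A / B := by
  rw [eq_div_iff hB, sub_eq_zero, exp_neg, inv_mul_eq_iff_eq_mul₀ (exp_pos s).ne', two_mul,
    exp_add, mul_assoc, eq_comm]

theorem caustic_relation (X₀ t α : ℝ) (hX₀ : 0 < X₀)
    (hα : (X₀ + Real.sqrt (X₀ ^ 2 + 4 * X₀)) / 2 < α) :
    HasDerivAt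
      (fun a : ℝ =>
        (1 / 2 + X₀ / (2 * a)) * Real.exp (a - t) +
          (1 / 2 - X₀ / (2 * a)) * Real.exp (t - a) - 1)
      ((Real.exp (α - t) * (α ^ 2 + α * X₀ - X₀) -
          Real.exp (t - α) * (α ^ 2 - α * X₀ - X₀)) / (2 * α ^ 2)) α ∧
    ((Real.exp (α - t) * (α ^ 2 + α * X₀ - X₀) -
        Real.exp (t - α) * (α ^ 2 - α * X₀ - X₀)) / (2 * α ^ 2) = 0 ↔
      Real.exp (2 * (t - α)) = (α ^ 2 + α * X₀ - X₀) / (α ^ 2 - α * X₀ - X₀)) := by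
  obtain ⟨hαpos, hden⟩ := pos_and_sq_sub_mul_sub_pos_of_root_lt hX₀.le hα
  refine ⟨hasDerivAt_ray X₀ t hαpos.ne', ?_⟩
  rw [div_eq_zero_iff, or_iff_left (by positivity), ← neg_sub t α]
  exact exp_neg_mul_sub_exp_mul_eq_zero_iff (t - α) hden.ne'
end
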